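/- For each fixed x ∈ (0,∞), the ratio t ↦ (Φ(x) - Φ((1-t)x))/t is increasing in t ∈ (0,1), where Φ is the standard normal distribution function. -/

import Mathlib

/-!
Write `f t = Φ(x) - Φ((1 - t) x)`. Then `f 0 = 0` and `f' t = x φ((1 - t) x)`, which increases in
`t ∈ (0, 1)` because the Gaussian density `φ` decreases on `[0, ∞)`. So `f` is strictly convex on
`[0, 1]`, and the slope `f t / t` of its secant through the origin is strictly increasing.
-/

open MeasureTheory Set ProbabilityTheory

noncomputable def stdNormalCDF (x : ℝ) : ℝ :=
  ∫ t in Set.Iic x, (Real.sqrt (2 * Real.pi))⁻¹ * Real.exp (-t ^ 2 / 2)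

theorem strictMonoOn_secant_of_strictMonoOn_deriv {f f' : ℝ → ℝ} {a b : ℝ}
    (hf : ContinuousOn f (Icc a b)) (hderiv : ∀ t ∈ Ioo a b, HasDerivAt f (f' t) t)
    (hf' : StrictMonoOn f' (Ioo a b)) :
    StrictMonoOn (fun t => (f t - f a) / (t - a)) (Ioc a b) := by
  have hconv : StrictConvexOn ℝ (Icc a b) f := by
    refine StrictMonoOn.strictConvexOn_of_deriv (convex_Icc a b) hf ?_
    rw [interior_Icc]
    exact hf'.congr fun t ht => ((hderiv t ht).deriv).symm
  intro s hs t ht hst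
  exact hconv.secant_strict_mono (left_mem_Icc.2 (hs.1.le.trans hs.2)) (Ioc_subset_Icc_self hs)
    (Ioc_subset_Icc_self ht) hs.1.ne' ht.1.ne' hst

theorem continuous_gaussianPDFReal (μ : ℝ) (v : NNReal) : Continuous (gaussianPDFReal μ v) := by
  rw [gaussianPDFReal_def]
  fun_prop

theorem gaussianPDFReal_strictAntiOn (μ : ℝ) {v : NNReal} (hv : v ≠ 0) :
    StrictAntiOn (gaussianPDFReal μ v) (Ici μ) := by
  intro s hs t ht hst
  have hsq : (s - μ) ^ 2 < (t - μ) ^ 2 := by gcongr; exact sub_nonneg.2 hs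
  rw [gaussianPDFReal_def]
  refine mul_lt_mul_of_pos_left (Real.exp_lt_exp.2 ?_) (by positivity)
  exact div_lt_div_of_pos_right (neg_lt_neg hsq) (by positivity)

theorem stdNormalCDF_eq_integral (x : ℝ) :
    stdNormalCDF x = ∫ t in Iic x, gaussianPDFReal 0 1 t := by
  simp [stdNormalCDF, gaussianPDFReal_def]

theorem hasDerivAt_stdNormalCDF (x : ℝ) : HasDerivAt stdNormalCDF (gaussianPDFReal 0 1 x) x := by
  have hint : Integrable (gaussianPDFReal 0 1) := integrable_gaussianPDFReal 0 1
  have hcont : Continuous (gaussianPDFReal 0 1) := continuous_gaussianPDFReal 0 1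
  have hΦ : stdNormalCDF = fun y => stdNormalCDF 0 + ∫ t in 0..y, gaussianPDFReal 0 1 t := by
    funext y
    rw [stdNormalCDF_eq_integral, stdNormalCDF_eq_integral,
      ← intervalIntegral.integral_Iic_sub_Iic hint.integrableOn hint.integrableOn]
    ring
  rw [hΦ]
  exact (intervalIntegral.integral_hasDerivAt_right hint.intervalIntegrable
    hcont.aestronglyMeasurable.stronglyMeasurableAtFilter hcont.continuousAt).const_add _

theorem ratio_increasing (x : ℝ) (hx : 0 < x) :
    StrictMonoOn (fun t : ℝ => (stdNormalCDF x - stdNormalCDF ((1 - t) * x)) / t)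
      (Set.Ioo 0 1) := by
  set f : ℝ → ℝ := fun t => stdNormalCDF x - stdNormalCDF ((1 - t) * x)
  have hderiv (t : ℝ) : HasDerivAt f (x * gaussianPDFReal 0 1 ((1 - t) * x)) t := by
    have hinner : HasDerivAt (fun t : ℝ => (1 - t) * x) (-x) t := by
      simpa using ((hasDerivAt_id t).const_sub 1).mul_const x
    exact (((hasDerivAt_stdNormalCDF _).comp t hinner).const_sub (stdNormalCDF x)).congr_deriv
      (by ring)
  have hmono : StrictMonoOn (fun t => x * gaussianPDFReal 0 1 ((1 - t) * x)) (Ioo 0 1) := by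
    intro s hs t ht hst
    refine mul_lt_mul_of_pos_left (gaussianPDFReal_strictAntiOn 0 one_ne_zero ?_ ?_ ?_) hx
    · exact mul_nonneg (sub_nonneg.2 ht.2.le) hx.le
    · exact mul_nonneg (sub_nonneg.2 hs.2.le) hx.le
    · exact mul_lt_mul_of_pos_right (by linarith) hx
  have hslope := strictMonoOn_secant_of_strictMonoOn_deriv
    (fun t _ => (hderiv t).continuousAt.continuousWithinAt) (fun t _ => hderiv t) hmono
  simpa [f] using hslope.mono Ioo_subset_Ioc_self
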